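/- arXiv:1201.6077 — 5 statements merged into one kernel-verified Lean document; each statement's English description precedes it below -/
import Mathlib

section
/- There is no universal quantum cloning unitary: if H and M are complex inner product spaces with dim H ≥ 2, there do not exist a unitary operator U on H ⊗ H ⊗ M, a unit vector b ∈ H (the 'blank'), a unit vector m ∈ M (the machine state), and a family of vectors (m_x)_{x ∈ H} in M such that U(x ⊗ b ⊗ m) = x ⊗ x ⊗ m_x for every unit vector x ∈ H. (Equivalently: any such U would have to preserve inner products, but for two unit vectors x, x' with 0 < |⟨x, x'⟩| < 1 one gets ⟨x,x'⟩ = ⟨x,x'⟩²⟨m_x, m_{x'}⟩, which is impossible.) -/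
/-!
A cloning unitary preserves inner products, so for unit vectors `x, x'` it forces
`⟨x, x'⟩ = ⟨x, x'⟩² ⟨m_x, m_{x'}⟩`, where the machine states `m_x` are unit vectors (take `x = x'`).
When `⟨x, x'⟩ ≠ 0` this gives `1 = ⟨x, x'⟩ ⟨m_x, m_{x'}⟩`, hence `1 ≤ |⟨x, x'⟩|` by Cauchy–Schwarz.
Since `dim H ≥ 2`, there are unit vectors with `0 < |⟨x, x'⟩| < 1`.
-/

open scoped InnerProductSpace

section
variable {𝕜 E : Type*} [RCLike 𝕜] [NormedAddCommGroup E] [InnerProductSpace 𝕜 E]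

theorem norm_eq_one_of_inner_self_eq_one {u : E} (h : ⟪u, u⟫_𝕜 = 1) : ‖u‖ = 1 := by
  have hsq := inner_self_eq_norm_sq (𝕜 := 𝕜) u
  rw [h, RCLike.one_re] at hsq
  exact (pow_eq_one_iff_of_nonneg (norm_nonneg u) two_ne_zero).1 hsq.symm

theorem exists_norm_eq_one_inner_ne_zero_norm_lt_one (h : 2 ≤ Module.finrank 𝕜 E) :
    ∃ x y : E, ‖x‖ = 1 ∧ ‖y‖ = 1 ∧ ⟪x, y⟫_𝕜 ≠ 0 ∧ ‖⟪x, y⟫_𝕜‖ < 1 := by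
  have : FiniteDimensional 𝕜 E := Module.finite_of_finrank_pos (by omega)
  have hB := (stdOrthonormalBasis 𝕜 E).orthonormal
  set u := stdOrthonormalBasis 𝕜 E ⟨0, by omega⟩
  set v := stdOrthonormalBasis 𝕜 E ⟨1, by omega⟩
  have hu : ‖u‖ = 1 := hB.1 _
  have hv : ‖v‖ = 1 := hB.1 _
  have huv : ⟪u, v⟫_𝕜 = 0 := hB.2 (by simp)
  -- `(3/5, 4/5)` is a rational point on the unit circle, so no square roots are needed.
  set y := (3 / 5 : 𝕜) • u + (4 / 5 : 𝕜) • v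
  have huy : ⟪u, y⟫_𝕜 = 3 / 5 := by
    simp [y, inner_add_right, inner_smul_right, huv, hu]
  have hyy : ⟪y, y⟫_𝕜 = 1 := by
    simp only [y, inner_add_left, inner_add_right, inner_smul_left, inner_smul_right, huv,
      inner_eq_zero_symm.1 huv, inner_self_eq_one_of_norm_eq_one hu,
      inner_self_eq_one_of_norm_eq_one hv, map_div₀, map_ofNat]
    norm_num
  refine ⟨u, y, hu, norm_eq_one_of_inner_self_eq_one hyy, ?_, ?_⟩
  · rw [huy]; norm_num
  · rw [huy]; norm_num

theorem one_le_norm_of_eq_sq_mul_inner {z : 𝕜} {u v : E} (hz : z ≠ 0) (hu : ‖u‖ = 1)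
    (hv : ‖v‖ = 1) (h : z = z ^ 2 * ⟪u, v⟫_𝕜) : 1 ≤ ‖z‖ := by
  have h1 : 1 = z * ⟪u, v⟫_𝕜 := mul_left_cancel₀ hz (by linear_combination h)
  calc (1 : ℝ) = ‖z‖ * ‖⟪u, v⟫_𝕜‖ := by rw [← norm_mul, ← h1, norm_one]
    _ ≤ ‖z‖ * (‖u‖ * ‖v‖) := by gcongr; exact norm_inner_le_norm u v
    _ = ‖z‖ := by rw [hu, hv, mul_one, mul_one]

end

theorem inner_eq_sq_mul_inner_of_clone {𝕜 H M T : Type*} [RCLike 𝕜]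
    [NormedAddCommGroup H] [InnerProductSpace 𝕜 H]
    [NormedAddCommGroup M] [InnerProductSpace 𝕜 M]
    [NormedAddCommGroup T] [InnerProductSpace 𝕜 T]
    (tp : H → H → M → T)
    (htp : ∀ (x y : H) (z : M) (x' y' : H) (z' : M),
      ⟪tp x y z, tp x' y' z'⟫_𝕜 = ⟪x, x'⟫_𝕜 * ⟪y, y'⟫_𝕜 * ⟪z, z'⟫_𝕜)
    (U : T →ₗᵢ[𝕜] T) {b x x' : H} {m m₁ m₂ : M} (hb : ‖b‖ = 1) (hm : ‖m‖ = 1)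
    (hx : U (tp x b m) = tp x x m₁) (hx' : U (tp x' b m) = tp x' x' m₂) :
    ⟪x, x'⟫_𝕜 = ⟪x, x'⟫_𝕜 ^ 2 * ⟪m₁, m₂⟫_𝕜 := by
  have hU := U.inner_map_map (tp x b m) (tp x' b m)
  rw [hx, hx', htp, htp, inner_self_eq_one_of_norm_eq_one hb,
    inner_self_eq_one_of_norm_eq_one hm] at hU
  linear_combination -hU

theorem no_universal_cloning_unitary_general
    {H M T : Type*}
    [NormedAddCommGroup H] [InnerProductSpace ℂ H]
    [NormedAddCommGroup M] [InnerProductSpace ℂ M]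
    [NormedAddCommGroup T] [InnerProductSpace ℂ T]
    (hdim : 2 ≤ Module.finrank ℂ H)
    (tp : H → H → M → T)
    (htp : ∀ (x y : H) (z : M) (x' y' : H) (z' : M),
      (inner ℂ (tp x y z) (tp x' y' z') : ℂ) =
        (inner ℂ x x' : ℂ) * (inner ℂ y y' : ℂ) * (inner ℂ z z' : ℂ)) :
    ¬ ∃ (U : T ≃ₗᵢ[ℂ] T) (b : H) (m : M) (mx : H → M),
        ‖b‖ = 1 ∧ ‖m‖ = 1 ∧
        ∀ x : H, ‖x‖ = 1 → U (tp x b m) = tp x x (mx x) := by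
  rintro ⟨U, b, m, mx, hb, hm, hU⟩
  have key : ∀ x x' : H, ‖x‖ = 1 → ‖x'‖ = 1 → ⟪x, x'⟫_ℂ = ⟪x, x'⟫_ℂ ^ 2 * ⟪mx x, mx x'⟫_ℂ :=
    fun x x' hx hx' =>
      inner_eq_sq_mul_inner_of_clone tp htp U.toLinearIsometry hb hm (hU x hx) (hU x' hx')
  have hmx : ∀ x : H, ‖x‖ = 1 → ‖mx x‖ = 1 := by
    intro x hx
    have hxx := key x x hx hx
    rw [inner_self_eq_one_of_norm_eq_one hx, one_pow, one_mul] at hxx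
    exact norm_eq_one_of_inner_self_eq_one hxx.symm
  obtain ⟨x, y, hx, hy, hxy, hxy_lt⟩ := exists_norm_eq_one_inner_ne_zero_norm_lt_one hdim
  exact hxy_lt.not_ge (one_le_norm_of_eq_sq_mul_inner hxy (hmx x hx) (hmx y hy) (key x y hx hy))

/-- **No-cloning theorem.** There is no universal quantum cloning unitary.
`H` and `M` are complex inner product spaces with `dim H ≥ 2`, and `T` plays the
role of the tensor product `H ⊗ H ⊗ M`: the map `tp x y z` represents
`x ⊗ y ⊗ z`, and inner products of such elementary tensors factorize as
`⟨x⊗y⊗z, x'⊗y'⊗z'⟩ = ⟨x,x'⟩⟨y,y'⟩⟨z,z'⟩`.  Then there do not exist a unitary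
`U` of `T`, a unit "blank" vector `b : H`, a unit machine state `m : M`, and a
family of vectors `mx : H → M` such that `U (x ⊗ b ⊗ m) = x ⊗ x ⊗ mx x` for
every unit vector `x : H`. -/
theorem no_universal_cloning_unitary
    {H M T : Type*}
    [NormedAddCommGroup H] [InnerProductSpace ℂ H] [FiniteDimensional ℂ H]
    [NormedAddCommGroup M] [InnerProductSpace ℂ M]
    [NormedAddCommGroup T] [InnerProductSpace ℂ T]
    (hdim : 2 ≤ Module.finrank ℂ H)
    (tp : H → H → M → T)
    (htp : ∀ (x y : H) (z : M) (x' y' : H) (z' : M),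
      (inner ℂ (tp x y z) (tp x' y' z') : ℂ) =
        (inner ℂ x x' : ℂ) * (inner ℂ y y' : ℂ) * (inner ℂ z z' : ℂ)) :
    ¬ ∃ (U : T ≃ₗᵢ[ℂ] T) (b : H) (m : M) (mx : H → M),
        ‖b‖ = 1 ∧ ‖m‖ = 1 ∧
        ∀ x : H, ‖x‖ = 1 → U (tp x b m) = tp x x (mx x) :=
  no_universal_cloning_unitary_general hdim tp htp
end

section
/- Let n ≥ 2 and let ρ : Perm(Fin n) → GL_k(ℝ) be a group homomorphism from the symmetric group on n letters to invertible k×k real matrices such that for every adjacent transposition (j, j+1) the matrix ρ((j, j+1)) is symmetric. Then for every i with 1 ≤ i < n, the matrix ρ((0, i)) representing the transposition exchanging 0 and i is also symmetric. (Proof idea: a symmetric matrix that is an involution is orthogonal; writing (0,i) = σ (i−1, i) σ⁻¹ with σ a product of adjacent transpositions, ρ((0,i)) = O S Oᵀ with O orthogonal and S symmetric, hence symmetric.) -/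
/-- If a representation `ρ` of the symmetric group `S_n` (`n ≥ 2`) by invertible
real `k×k` matrices sends every adjacent transposition `(j, j+1)` to a symmetric
matrix, then it sends every transposition `(0, i)` (for `1 ≤ i < n`) to a
symmetric matrix as well. -/
theorem symm_of_adjacent_symm {n k : ℕ} (hn : 2 ≤ n)
    (ρ : Equiv.Perm (Fin n) →* Matrix.GeneralLinearGroup (Fin k) ℝ)
    (hadj : ∀ (j : ℕ) (h : j + 1 < n),
      ((ρ (Equiv.swap ⟨j, by omega⟩ ⟨j + 1, h⟩) :
          Matrix.GeneralLinearGroup (Fin k) ℝ) : Matrix (Fin k) (Fin k) ℝ).IsSymm) :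
    ∀ (i : ℕ) (h : i < n), 1 ≤ i →
      ((ρ (Equiv.swap ⟨0, by omega⟩ ⟨i, h⟩) :
          Matrix.GeneralLinearGroup (Fin k) ℝ) : Matrix (Fin k) (Fin k) ℝ).IsSymm := by
  intro i
  induction i with
  | zero => intro h h1; omega
  | succ m ih =>
    intro h h1
    by_cases hm : m = 0
    · subst hm
      exact hadj 0 h
    · have hm1 : 1 ≤ m := Nat.one_le_iff_ne_zero.mpr hm
      have hmn : m < n := by omega
      set f : Equiv.Perm (Fin n) := Equiv.swap ⟨m, by omega⟩ ⟨m + 1, h⟩ with hf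
      have hf0 : f ⟨0, by omega⟩ = ⟨0, by omega⟩ := by
        apply Equiv.swap_apply_of_ne_of_ne <;> simp [Fin.ext_iff] <;> omega
      have hfm : f ⟨m, hmn⟩ = ⟨m + 1, h⟩ := Equiv.swap_apply_left _ _
      have key : Equiv.swap (⟨0, by omega⟩ : Fin n) ⟨m + 1, h⟩ =
          f * Equiv.swap ⟨0, by omega⟩ ⟨m, hmn⟩ * f := by
        have := Equiv.swap_apply_apply f (⟨0, by omega⟩ : Fin n) ⟨m, hmn⟩
        rw [hf0, hfm] at this
        rw [this]
        ext x
        simp [Equiv.Perm.mul_apply, hf, Equiv.swap_apply_self]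
      have hA := hadj m h
      have hB := ih hmn hm1
      rw [key, map_mul, map_mul]
      have : ((ρ f * ρ (Equiv.swap ⟨0, by omega⟩ ⟨m, hmn⟩) * ρ f :
          Matrix.GeneralLinearGroup (Fin k) ℝ) : Matrix (Fin k) (Fin k) ℝ)
          = (ρ f : Matrix (Fin k) (Fin k) ℝ) *
            (ρ (Equiv.swap ⟨0, by omega⟩ ⟨m, hmn⟩) : Matrix (Fin k) (Fin k) ℝ) *
            (ρ f : Matrix (Fin k) (Fin k) ℝ) := rfl
      rw [this]
      unfold Matrix.IsSymm
      rw [Matrix.transpose_mul, Matrix.transpose_mul, hA.eq, hB.eq, Matrix.mul_assoc]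
end

section
/- Let S = V₁₂ + V₁₃ + V₁₄ be the sum of the explicit (3,1)-representation matrices V₁₂ = [[1,0,0],[0,1,0],[0,0,−1]], V₁₃ = [[1,0,0],[0,−1/2,−√3/2],[0,−√3/2,1/2]], V₁₄ = [[−1/3,−√2/3,−√6/3],[−√2/3,5/6,−√3/6],[−√6/3,−√3/6,1/2]]. Then S has eigenvalues −1, 2, 2 (its characteristic polynomial is (λ+1)(λ−2)²). Consequently ⟨ψ, S ψ⟩ ≥ −1 for every real unit vector ψ ∈ ℝ³, and the three fidelities F₁ₖ = 1/2 − (1/2)⟨ψ, V₁ₖ ψ⟩ satisfy F₁₂ + F₁₃ + F₁₄ ≤ 2 for every real unit vector ψ, with equality attained. -/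
open Matrix Polynomial

/-- The matrix of the transposition (12) in the (3,1)-irrep of S₄. -/
noncomputable def V12 : Matrix (Fin 3) (Fin 3) ℝ :=
  !![1, 0, 0; 0, 1, 0; 0, 0, -1]

/-- The matrix of the transposition (13) in the (3,1)-irrep of S₄. -/
noncomputable def V13 : Matrix (Fin 3) (Fin 3) ℝ :=
  !![1, 0, 0;
     0, -1/2, -Real.sqrt 3 / 2;
     0, -Real.sqrt 3 / 2, 1/2]

/-- The matrix of the transposition (14) in the (3,1)-irrep of S₄. -/
noncomputable def V14 : Matrix (Fin 3) (Fin 3) ℝ :=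
  !![-1/3, -Real.sqrt 2 / 3, -Real.sqrt 6 / 3;
     -Real.sqrt 2 / 3, 5/6, -Real.sqrt 3 / 6;
     -Real.sqrt 6 / 3, -Real.sqrt 3 / 6, 1/2]

lemma aux_h6 : Real.sqrt 6 = Real.sqrt 2 * Real.sqrt 3 := by
  rw [← Real.sqrt_mul (by norm_num)]; norm_num

lemma aux_quad (ψ : Fin 3 → ℝ) (h : ∑ j, ψ j ^ 2 = 1) :
    -1 ≤ ψ ⬝ᵥ (V12 + V13 + V14).mulVec ψ := by
  have h2 : Real.sqrt 2 ^ 2 = 2 := Real.sq_sqrt (by norm_num)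
  have h3 : Real.sqrt 3 ^ 2 = 3 := Real.sq_sqrt (by norm_num)
  simp only [Fin.sum_univ_three] at h
  simp [Matrix.mulVec, dotProduct, Fin.sum_univ_three, V12, V13, V14, aux_h6,
    Matrix.vecHead, Matrix.vecTail]
  set s2 := Real.sqrt 2
  set s3 := Real.sqrt 3
  have key : ψ 0 * ((1 + 1 + -1 / 3) * ψ 0 + -s2 / 3 * ψ 1 + -(s2 * s3) / 3 * ψ 2) +
        ψ 1 * (-s2 / 3 * ψ 0 + (1 + -1 / 2 + 5 / 6) * ψ 1 + (-s3 / 2 + -s3 / 6) * ψ 2) +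
      ψ 2 * (-(s2 * s3) / 3 * ψ 0 + (-s3 / 2 + -s3 / 6) * ψ 1 + (-1 + 2⁻¹ + 2⁻¹) * ψ 2)
      = -1 + (1/3) * ((s2 * ψ 0 - ψ 1)^2 + (s2 * s3 * ψ 0 - ψ 2)^2 + (s2 * s3 * ψ 1 - s2 * ψ 2)^2) := by
    linear_combination (-1 : ℝ) * h +
      ((2/3) * s3 * ψ 1 * ψ 2 - (1/3) * ψ 2 ^ 2 - (1/3) * s3^2 * ψ 1 ^ 2 - (1/3) * ψ 0 ^ 2 - (1/3) * s3^2 * ψ 0 ^ 2) * h2 +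
      (-(2/3) * ψ 1 ^ 2 - (2/3) * ψ 0 ^ 2) * h3
  rw [key]
  nlinarith [sq_nonneg (s2 * ψ 0 - ψ 1), sq_nonneg (s2 * s3 * ψ 0 - ψ 2), sq_nonneg (s2 * s3 * ψ 1 - s2 * ψ 2)]

lemma aux_lin (ψ : Fin 3 → ℝ) :
    (1/2 - (1/2) * (ψ ⬝ᵥ V12.mulVec ψ)) +
    (1/2 - (1/2) * (ψ ⬝ᵥ V13.mulVec ψ)) +
    (1/2 - (1/2) * (ψ ⬝ᵥ V14.mulVec ψ)) =
    3/2 - (1/2) * (ψ ⬝ᵥ (V12 + V13 + V14).mulVec ψ) := by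
  rw [Matrix.add_mulVec, Matrix.add_mulVec, dotProduct_add, dotProduct_add]
  ring

/-- The sum `S = V₁₂ + V₁₃ + V₁₄` of the (3,1)-irrep transposition matrices has
characteristic polynomial `(λ+1)(λ−2)²` (eigenvalues `−1, 2, 2`); consequently
`⟨ψ, S ψ⟩ ≥ −1` for every real unit vector `ψ ∈ ℝ³`, hence the fidelities
`F₁ₖ = 1/2 − (1/2)⟨ψ, V₁ₖ ψ⟩` satisfy `F₁₂ + F₁₃ + F₁₄ ≤ 2`, with equality
attained. -/
theorem partition31_sum_spectrum_and_fidelity_bound :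
    (V12 + V13 + V14).charpoly = (X + C 1) * (X - C 2) ^ 2 ∧
    (∀ ψ : Fin 3 → ℝ, (∑ j, ψ j ^ 2 = 1) →
      -1 ≤ ψ ⬝ᵥ (V12 + V13 + V14).mulVec ψ) ∧
    (∀ ψ : Fin 3 → ℝ, (∑ j, ψ j ^ 2 = 1) →
      (1/2 - (1/2) * (ψ ⬝ᵥ V12.mulVec ψ)) +
      (1/2 - (1/2) * (ψ ⬝ᵥ V13.mulVec ψ)) +
      (1/2 - (1/2) * (ψ ⬝ᵥ V14.mulVec ψ)) ≤ 2) ∧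
    (∃ ψ : Fin 3 → ℝ, (∑ j, ψ j ^ 2 = 1) ∧
      (1/2 - (1/2) * (ψ ⬝ᵥ V12.mulVec ψ)) +
      (1/2 - (1/2) * (ψ ⬝ᵥ V13.mulVec ψ)) +
      (1/2 - (1/2) * (ψ ⬝ᵥ V14.mulVec ψ)) = 2) := by
  have h2 : Real.sqrt 2 ^ 2 = 2 := Real.sq_sqrt (by norm_num)
  have h3 : Real.sqrt 3 ^ 2 = 3 := Real.sq_sqrt (by norm_num)
  refine ⟨?_, aux_quad, ?_, ?_⟩
  · apply Polynomial.funext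
    intro x
    simp [Matrix.charpoly, Matrix.det_fin_three, charmatrix_apply_eq, charmatrix_apply_ne,
      V12, V13, V14, aux_h6]
    linear_combination (-4/9*x + 8/9) * h2 +
      (-4/9*x - 1/9*x*Real.sqrt 2^2 + 20/27 + 8/27*Real.sqrt 2^2) * h3
  · intro ψ hψ
    have := aux_quad ψ hψ
    rw [aux_lin]
    linarith
  · refine ⟨![1/3, Real.sqrt 2 / 3, Real.sqrt 6 / 3], ?_, ?_⟩
    · simp [Fin.sum_univ_three, aux_h6]
      linear_combination (1/9 + Real.sqrt 3 ^ 2 / 9) * h2 + (2/9) * h3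
    · rw [aux_lin]
      have hQ : (![1/3, Real.sqrt 2 / 3, Real.sqrt 6 / 3] : Fin 3 → ℝ) ⬝ᵥ
          (V12 + V13 + V14).mulVec ![1/3, Real.sqrt 2 / 3, Real.sqrt 6 / 3] = -1 := by
        simp [Matrix.mulVec, dotProduct, Fin.sum_univ_three, V12, V13, V14, aux_h6,
          Matrix.vecHead, Matrix.vecTail]
        linear_combination (2/27 - (2/9) * Real.sqrt 3 ^ 2) * h2 + (-4/9 : ℝ) * h3
      rw [hQ]
      norm_num
end

section
/- The optimal symmetric point for the 1→3 cloner on the partition (3,1): the real unit vector ψ = (1/3, √2/3, √6/3) ∈ ℝ³ satisfies 1/2 − (1/2)⟨ψ, V₁₂ ψ⟩ = 2/3, 1/2 − (1/2)⟨ψ, V₁₃ ψ⟩ = 2/3, and 1/2 − (1/2)⟨ψ, V₁₄ ψ⟩ = 2/3, where V₁₂ = [[1,0,0],[0,1,0],[0,0,−1]], V₁₃ = [[1,0,0],[0,−1/2,−√3/2],[0,−√3/2,1/2]], V₁₄ = [[−1/3,−√2/3,−√6/3],[−√2/3,5/6,−√3/6],[−√6/3,−√3/6,1/2]]. Thus the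 symmetric triple of fidelities (F₁₂, F₁₃, F₁₄) = (2/3, 2/3, 2/3), corresponding via f = (2F+1)/3 to the optimal symmetric cloning fidelity 7/9 of Werner's formula, is attained. -/
open Matrix

/-- The real unit vector `ψ = (1/3, √2/3, √6/3) ∈ ℝ³` attains the symmetric
triple of fidelities `(2/3, 2/3, 2/3)` on the (3,1)-irrep: each fidelity
`1/2 − (1/2)⟨ψ, V₁ₖ ψ⟩` equals `2/3` (corresponding, via `f = (2F+1)/3`, to
Werner's optimal symmetric 1→3 cloning fidelity `7/9`). -/
theorem partition31_symmetric_optimal_point :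
    (∑ j, (![1/3, Real.sqrt 2 / 3, Real.sqrt 6 / 3] : Fin 3 → ℝ) j ^ 2 = 1) ∧
    1/2 - (1/2) * ((![1/3, Real.sqrt 2 / 3, Real.sqrt 6 / 3] : Fin 3 → ℝ) ⬝ᵥ
        V12.mulVec ![1/3, Real.sqrt 2 / 3, Real.sqrt 6 / 3]) = 2/3 ∧
    1/2 - (1/2) * ((![1/3, Real.sqrt 2 / 3, Real.sqrt 6 / 3] : Fin 3 → ℝ) ⬝ᵥ
        V13.mulVec ![1/3, Real.sqrt 2 / 3, Real.sqrt 6 / 3]) = 2/3 ∧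
    1/2 - (1/2) * ((![1/3, Real.sqrt 2 / 3, Real.sqrt 6 / 3] : Fin 3 → ℝ) ⬝ᵥ
        V14.mulVec ![1/3, Real.sqrt 2 / 3, Real.sqrt 6 / 3]) = 2/3 := by

  have h2 : Real.sqrt 2 ^ 2 = 2 := Real.sq_sqrt (by norm_num)
  have h3 : Real.sqrt 3 ^ 2 = 3 := Real.sq_sqrt (by norm_num)
  have h6 : Real.sqrt 6 ^ 2 = 6 := Real.sq_sqrt (by norm_num)
  have h23 : Real.sqrt 2 * Real.sqrt 3 = Real.sqrt 6 := by
    rw [← Real.sqrt_mul (by norm_num)]; norm_num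
  have h63 : Real.sqrt 6 * Real.sqrt 3 = 3 * Real.sqrt 2 := by
    nlinarith [Real.sqrt_nonneg 2, Real.sqrt_nonneg 3, Real.sqrt_nonneg 6]
  have h26 : Real.sqrt 2 * Real.sqrt 6 = 2 * Real.sqrt 3 := by
    nlinarith [Real.sqrt_nonneg 2, Real.sqrt_nonneg 3, Real.sqrt_nonneg 6]
  refine ⟨?_, ?_, ?_, ?_⟩ <;>
    simp [V12, V13, V14, dotProduct, mulVec, Fin.sum_univ_succ] <;>
    nlinarith [h2, h3, h6, h23, h63, h26]
end

section
/- Constrained maximization on the partition (2,2): for real numbers a₁, a₂ with a₁² + a₂² = 1, define F₁ = (1 − a₁² + a₂²)/2, F₂ = (1 + a₁²/2 − a₂²/2 + √3·a₁a₂)/2, F₃ = (1 + a₁²/2 − a₂²/2 − √3·a₁a₂)/2. Then under the additional constraint F₁ + F₃ = 2F₂, one always has F₁ ≤ (2+√3)/4, and this maximum is attained, e.g. at (a₁, a₂) = ((1/2)√(2−√3), (1/2)√(2+√3)), where (F₁, F₂, F₃) = ((2+√3)/4, 1/2, (2−√3)/4). -/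
/-- Constrained maximization on the partition (2,2): for `a₁² + a₂² = 1` and the
fidelities `F₁ = (1 − a₁² + a₂²)/2`, `F₂ = (1 + a₁²/2 − a₂²/2 + √3 a₁a₂)/2`,
`F₃ = (1 + a₁²/2 − a₂²/2 − √3 a₁a₂)/2`, the constraint `F₁ + F₃ = 2F₂` implies
`F₁ ≤ (2+√3)/4`, and this maximum is attained at
`(a₁, a₂) = ((1/2)√(2−√3), (1/2)√(2+√3))`, where
`(F₁, F₂, F₃) = ((2+√3)/4, 1/2, (2−√3)/4)`. -/
theorem partition22_constrained_max :
    (∀ a₁ a₂ : ℝ, a₁ ^ 2 + a₂ ^ 2 = 1 →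
      (1 - a₁ ^ 2 + a₂ ^ 2) / 2 +
          (1 + a₁ ^ 2 / 2 - a₂ ^ 2 / 2 - Real.sqrt 3 * (a₁ * a₂)) / 2 =
        2 * ((1 + a₁ ^ 2 / 2 - a₂ ^ 2 / 2 + Real.sqrt 3 * (a₁ * a₂)) / 2) →
      (1 - a₁ ^ 2 + a₂ ^ 2) / 2 ≤ (2 + Real.sqrt 3) / 4) ∧
    (∃ a₁ a₂ : ℝ,
      a₁ = (1 / 2) * Real.sqrt (2 - Real.sqrt 3) ∧
      a₂ = (1 / 2) * Real.sqrt (2 + Real.sqrt 3) ∧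
      a₁ ^ 2 + a₂ ^ 2 = 1 ∧
      (1 - a₁ ^ 2 + a₂ ^ 2) / 2 +
          (1 + a₁ ^ 2 / 2 - a₂ ^ 2 / 2 - Real.sqrt 3 * (a₁ * a₂)) / 2 =
        2 * ((1 + a₁ ^ 2 / 2 - a₂ ^ 2 / 2 + Real.sqrt 3 * (a₁ * a₂)) / 2) ∧
      (1 - a₁ ^ 2 + a₂ ^ 2) / 2 = (2 + Real.sqrt 3) / 4 ∧
      (1 + a₁ ^ 2 / 2 - a₂ ^ 2 / 2 + Real.sqrt 3 * (a₁ * a₂)) / 2 = 1 / 2 ∧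
      (1 + a₁ ^ 2 / 2 - a₂ ^ 2 / 2 - Real.sqrt 3 * (a₁ * a₂)) / 2 =
        (2 - Real.sqrt 3) / 4) := by
  have hs : Real.sqrt 3 ^ 2 = 3 := Real.sq_sqrt (by norm_num)
  have hs0 : (0:ℝ) ≤ Real.sqrt 3 := Real.sqrt_nonneg 3
  have hs1 : (1:ℝ) ≤ Real.sqrt 3 := by nlinarith
  constructor
  · intro a₁ a₂ h1 h2
    set s := Real.sqrt 3 with hsdef
    -- constraint gives a₂² - a₁² = 2 s a₁ a₂
    have hc : a₂ ^ 2 - a₁ ^ 2 = 2 * s * (a₁ * a₂) := by linarith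
    -- so 12 t² = 1 - 4 t², t = ±1/4
    have ht : (a₁ * a₂) ^ 2 = 1 / 16 := by nlinarith [sq_nonneg (a₁^2 - a₂^2)]
    have ht4 : a₁ * a₂ ≤ 1 / 4 := by nlinarith [sq_nonneg (a₁ * a₂ - 1/4), sq_nonneg (a₁*a₂ + 1/4)]
    nlinarith [mul_le_mul_of_nonneg_left ht4 hs0]
  · have h3 : (0:ℝ) ≤ 2 - Real.sqrt 3 := by nlinarith
    have h3' : (0:ℝ) ≤ 2 + Real.sqrt 3 := by linarith
    have e1 : ((1 / 2) * Real.sqrt (2 - Real.sqrt 3)) ^ 2 = (2 - Real.sqrt 3) / 4 := by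
      rw [mul_pow, Real.sq_sqrt h3]; ring
    have e2 : ((1 / 2) * Real.sqrt (2 + Real.sqrt 3)) ^ 2 = (2 + Real.sqrt 3) / 4 := by
      rw [mul_pow, Real.sq_sqrt h3']; ring
    have hmul : Real.sqrt (2 - Real.sqrt 3) * Real.sqrt (2 + Real.sqrt 3) = 1 := by
      rw [← Real.sqrt_mul h3]
      have h1 : (2 - Real.sqrt 3) * (2 + Real.sqrt 3) = 1 := by nlinarith
      rw [h1, Real.sqrt_one]
    have e3 : (1 / 2) * Real.sqrt (2 - Real.sqrt 3) * ((1 / 2) * Real.sqrt (2 + Real.sqrt 3)) = 1 / 4 := by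
      calc (1 / 2) * Real.sqrt (2 - Real.sqrt 3) * ((1 / 2) * Real.sqrt (2 + Real.sqrt 3))
          = Real.sqrt (2 - Real.sqrt 3) * Real.sqrt (2 + Real.sqrt 3) / 4 := by ring
        _ = 1 / 4 := by rw [hmul]
    refine ⟨_, _, rfl, rfl, ?_, ?_, ?_, ?_, ?_⟩ <;>
      simp only [e1, e2, e3] <;> ring_nf
end
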